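/- arXiv:2511.03524 — 2 statements merged into one kernel-verified Lean document; each statement's English description precedes it below -/
import Mathlib

section
/- Let X be a connected graph and suppose there exists a proper incidence coloring φ : Inc(X) → [κ]. Then there exists a graph G containing a 5-subdivision of X as an induced subgraph, and isometric subgraphs H₁, …, H_{κ+1} of G that edge cover G, where each Hᵢ is a tree of radius 2. -/
open SimpleGraph
open scoped Classical

noncomputable instance setFintypeOfFintype {V : Type} [Fintype V] (s : Set V) : Fintype ↥s :=
  (Set.toFinite s).fintype

/-- Treedepth, defined recursively as in the paper. -/
noncomputable def treedepth {V : Type} [Fintype V] (G : SimpleGraph V) : ℕ :=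
  if hV : IsEmpty V then 0
  else if hc : G.Connected then
    1 + ⨅ v : V, treedepth (G.induce {x | x ≠ v})
  else
    ⨆ c : G.ConnectedComponent, treedepth (G.induce c.supp)
termination_by Fintype.card V
decreasing_by
  · have h := Fintype.card_subtype_lt (p := fun x => x ≠ v) (x := v) (by simp)
    convert h using 2
    all_goals rfl
  · obtain ⟨u, _⟩ := Quot.exists_rep c
    by_cases hu : u ∈ c.supp
    · haveI : Nonempty V := not_isEmpty_iff.mp hV
      have hpre : ¬ G.Preconnected := fun hp => hc ⟨hp⟩
      rw [SimpleGraph.Preconnected] at hpre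
      push_neg at hpre
      obtain ⟨a, b, hab⟩ := hpre
      have hor : a ∉ c.supp ∨ b ∉ c.supp := by
        by_contra h
        push_neg at h
        obtain ⟨ha, hb⟩ := h
        rw [SimpleGraph.ConnectedComponent.mem_supp_iff] at ha hb
        exact hab (SimpleGraph.ConnectedComponent.exact (ha.trans hb.symm))
      obtain hx | hx := hor
      · have h := Fintype.card_subtype_lt (p := fun x => x ∈ c.supp) (x := a) hx
        convert h using 2
      · have h := Fintype.card_subtype_lt (p := fun x => x ∈ c.supp) (x := b) hx
        convert h using 2
    · have h := Fintype.card_subtype_lt (p := fun x => x ∈ c.supp) (x := u) hu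
      convert h using 2
/-- A tree decomposition of width at most `k`. -/
def HasTreeDecompositionOfWidthLE {V : Type} (G : SimpleGraph V) (k : ℕ) : Prop :=
  ∃ (ι : Type) (T : SimpleGraph ι) (bag : ι → Finset V),
    T.IsTree ∧
    (∀ v : V, (T.induce {x | v ∈ bag x}).Connected) ∧
    (∀ u v : V, G.Adj u v → ∃ x, u ∈ bag x ∧ v ∈ bag x) ∧
    (∀ x, (bag x).card ≤ k + 1)

/-- Treewidth: minimum width of a tree decomposition. -/
noncomputable def treewidth {V : Type} (G : SimpleGraph V) : ℕ :=
  sInf {k | HasTreeDecompositionOfWidthLE G k}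

/-- A path decomposition of width at most `k`. -/
def HasPathDecompositionOfWidthLE {V : Type} (G : SimpleGraph V) (k : ℕ) : Prop :=
  ∃ (n : ℕ) (bag : Fin n → Finset V),
    (∀ v : V, ((SimpleGraph.pathGraph n).induce {x | v ∈ bag x}).Connected) ∧
    (∀ u v : V, G.Adj u v → ∃ x, u ∈ bag x ∧ v ∈ bag x) ∧
    (∀ x, (bag x).card ≤ k + 1)

/-- Pathwidth: minimum width of a path decomposition. -/
noncomputable def pathwidth {V : Type} (G : SimpleGraph V) : ℕ :=
  sInf {k | HasPathDecompositionOfWidthLE G k}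

/-- The radius of a graph: the least `r` such that some vertex is within distance `r`
of every vertex. -/
noncomputable def graphRadius {V : Type} (G : SimpleGraph V) : ℕ :=
  sInf {r | ∃ u : V, ∀ v : V, G.dist u v ≤ r}

/-- A proper incidence coloring: the two incidences of an edge get different colors, and
incidences at a common vertex get different colors. -/
def IsProperIncidenceColoring {V : Type} (X : SimpleGraph V) {κ : ℕ}
    (φ : V → Sym2 V → Fin κ) : Prop :=
  (∀ u v : V, X.Adj u v → φ u s(u, v) ≠ φ v s(u, v)) ∧
  (∀ u v w : V, X.Adj u v → X.Adj u w → v ≠ w → φ u s(u, v) ≠ φ u s(u, w))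

/-- `H` is isometric in `G`: distances in `H` agree with distances in `G`. -/
def SimpleGraph.Subgraph.IsIsometric {V : Type} {G : SimpleGraph V} (H : G.Subgraph) : Prop :=
  ∀ x y : H.verts, H.coe.dist x y = G.dist x y

/-- A family of subgraphs edge covers `G` if every edge of `G` lies in some member. -/
def EdgeCover {V : Type} {G : SimpleGraph V} {ι : Type} (H : ι → G.Subgraph) : Prop :=
  ∀ u v : V, G.Adj u v → ∃ i, (H i).Adj u v

/-- `A` embeds in `X` as a (not necessarily induced) subgraph. -/
def IsSubgraphEmbeddable {W U : Type} (A : SimpleGraph W) (X : SimpleGraph U) : Prop :=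
  ∃ f : W → U, Function.Injective f ∧ ∀ u v : W, A.Adj u v → X.Adj (f u) (f v)

/-- `H ∈ Apex(X)`: some vertex of `H` can be removed so that every connected component of
the rest is a subgraph of `X`. -/
def InApex {W U : Type} (H : SimpleGraph W) (X : SimpleGraph U) : Prop :=
  ∃ a : W, ∀ c : (H.induce {x | x ≠ a}).ConnectedComponent,
    IsSubgraphEmbeddable ((H.induce {x | x ≠ a}).induce c.supp) X

/-- The star on `Δ+1` vertices with every edge subdivided once:
`none` is the center, `some (i, false)` the subdivision vertices, `some (i, true)` the leaves. -/
def subdividedStar (Δ : ℕ) : SimpleGraph (Option (Fin Δ × Bool)) :=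
  SimpleGraph.fromRel (fun p q =>
    (p = none ∧ ∃ i, q = some (i, false)) ∨
    (∃ i, p = some (i, false) ∧ q = some (i, true)))

/-- `H` is a minor of `G`, witnessed by branch sets. -/
def IsMinorOf {W V : Type} (H : SimpleGraph W) (G : SimpleGraph V) : Prop :=
  ∃ B : W → Set V, (∀ w, (G.induce (B w)).Connected) ∧
    (Pairwise fun w w' => Disjoint (B w) (B w')) ∧
    (∀ w w', H.Adj w w' → ∃ u ∈ B w, ∃ v ∈ B w', G.Adj u v)

/-- The `n × m` grid graph. -/
def gridGraph (n m : ℕ) : SimpleGraph (Fin n × Fin m) :=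
  (SimpleGraph.pathGraph n).boxProd (SimpleGraph.pathGraph m)

/-- The wall of order `n`: the `n × (2n+1)` grid with the vertical edges `(a,b)(a+1,b)`
removed whenever `a` and `b` have different parity. -/
def wall (n : ℕ) : SimpleGraph (Fin n × Fin (2 * n + 1)) :=
  SimpleGraph.fromRel (fun p q =>
    (p.1 = q.1 ∧ p.2.val + 1 = q.2.val) ∨
    (p.2 = q.2 ∧ p.1.val + 1 = q.1.val ∧ p.1.val % 2 = p.2.val % 2))

/-- The graph obtained from `G` by subdividing the edge `uv` once: the edge `uv` is removed
and the new vertex `Sum.inr ()` is joined to `u` and `v`. -/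
def subdivideEdge {V : Type} (G : SimpleGraph V) (u v : V) : SimpleGraph (V ⊕ Unit) :=
  SimpleGraph.fromRel (fun p q =>
    (∃ a b, p = Sum.inl a ∧ q = Sum.inl b ∧ G.Adj a b ∧ s(a, b) ≠ s(u, v)) ∨
    (∃ a, p = Sum.inl a ∧ q = Sum.inr () ∧ (a = u ∨ a = v)))

/-- `H` is a subdivision of `G`. -/
inductive IsSubdivisionOf : {V W : Type} → SimpleGraph V → SimpleGraph W → Prop
  | of_iso {V W : Type} {H : SimpleGraph V} {G : SimpleGraph W} (e : H ≃g G) :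
      IsSubdivisionOf H G
  | step {V W : Type} {H : SimpleGraph V} {G : SimpleGraph W} {u v : W} (huv : G.Adj u v)
      (h : IsSubdivisionOf H (subdivideEdge G u v)) : IsSubdivisionOf H G

/-- The `c`-subdivision of `X`: every edge of `X` is replaced by a path with `c` internal
vertices. The internal vertices of the edge `e` are `Sum.inr (e, 0), …, Sum.inr (e, c-1)`,
ordered from the endpoint `(Quot.out e).1` to the endpoint `(Quot.out e).2`. -/
def csubdivision {V : Type} (X : SimpleGraph V) (c : ℕ) :
    SimpleGraph (V ⊕ (↥X.edgeSet × Fin c)) :=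
  SimpleGraph.fromRel (fun p q =>
    (∃ (u : V) (e : X.edgeSet) (i : Fin c),
        p = Sum.inl u ∧ q = Sum.inr (e, i) ∧
        ((u = (Quot.out (e : Sym2 V)).1 ∧ i.val = 0) ∨
         (u = (Quot.out (e : Sym2 V)).2 ∧ i.val = c - 1))) ∨
    (∃ (e : X.edgeSet) (i j : Fin c), p = Sum.inr (e, i) ∧ q = Sum.inr (e, j) ∧
        i.val + 1 = j.val))

/-
`G` is the 5-subdivision of `X` together with one apex for each of the `κ + 1` colours: apex
`i < κ` is joined to the subdivision vertex next to `u` on the edge `e` whenever `φ u e = i`,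
and the extra apex `κ` is joined to the midpoint of every subdivided edge. `Hᵢ` is the subgraph
induced by the closed ball of radius 2 around apex `i`. Every edge of `G` has an endpoint adjacent
to an apex, so these balls cover all edges.

`G` is bipartite, and in a bipartite graph the ball of radius 2 around `a` is a tree as soon as
no two neighbours of `a` have a second common neighbour, and it is isometric as soon as no vertex
outside it has two neighbours inside it. The vertex condition of the incidence colouring gives the
first property and the edge condition the second. A pendant path of length 4 through each apex
makes every radius exactly 2.
-/

namespace SimpleGraph

variable {W : Type}

theorem Walk.abs_sub_le_length {G : SimpleGraph W} {f : W → ℤ}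
    (hf : ∀ u v, G.Adj u v → |f u - f v| ≤ 1) {x y : W} (p : G.Walk x y) :
    |f x - f y| ≤ p.length := by
  induction p with
  | nil => simp
  | @cons u v w h p ih =>
    have := abs_sub_le (f u) (f v) (f w)
    have := hf u v h
    push_cast [Walk.length_cons]
    linarith

theorem Reachable.abs_sub_le_dist {G : SimpleGraph W} {f : W → ℤ}
    (hf : ∀ u v, G.Adj u v → |f u - f v| ≤ 1) {x y : W} (h : G.Reachable x y) :
    |f x - f y| ≤ G.dist x y := by
  obtain ⟨p, hp⟩ := h.exists_walk_length_eq_dist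
  exact hp ▸ p.abs_sub_le_length hf

/-- A vertex of maximal level on a cycle would have two distinct neighbours of lower level. -/
theorem isAcyclic_of_level {G : SimpleGraph W} (d : W → ℕ)
    (hstep : ∀ u v, G.Adj u v → d u + 1 = d v ∨ d v + 1 = d u)
    (huniq : ∀ u w v, G.Adj u v → G.Adj w v → d u + 1 = d v → d w + 1 = d v → u = w) :
    G.IsAcyclic := by
  intro v c hc
  obtain ⟨u, hu, hmax⟩ := c.support.toFinset.exists_max_image d ⟨v, by simp⟩
  rw [List.mem_toFinset] at hu
  have hc' := hc.rotate hu
  have hlow : ∀ z, G.Adj z u → z ∈ (c.rotate u hu).support → d z + 1 = d u := fun z hz hmem =>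
    (hstep z u hz).resolve_right fun h => by
      have := hmax z (by simpa using hmem)
      omega
  have hnil := hc'.not_nil
  exact hc'.snd_ne_penultimate <| huniq _ _ u (Walk.adj_snd hnil).symm (Walk.adj_penultimate hnil)
    (hlow _ (Walk.adj_snd hnil).symm (Walk.getVert_mem_support _ _))
    (hlow _ (Walk.adj_penultimate hnil) (Walk.getVert_mem_support _ _))

theorem Coloring.eq_of_adj_adj {G : SimpleGraph W} (c : G.Coloring Bool) {x y z : W}
    (hxy : G.Adj x y) (hyz : G.Adj y z) : c x = c z := by
  have h1 := c.valid hxy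
  have h2 := c.valid hyz
  revert h1 h2
  cases c x <;> cases c y <;> cases c z <;> decide

variable (G : SimpleGraph W)

def twoBall (a : W) : Set W := {x | x = a ∨ G.Adj a x ∨ ∃ p, G.Adj a p ∧ G.Adj p x}

abbrev twoBallSubgraph (a : W) : G.Subgraph := (⊤ : G.Subgraph).induce (G.twoBall a)

variable {G} {a : W}

theorem center_mem_twoBall : a ∈ G.twoBall a := Or.inl rfl

theorem twoBallSubgraph_adj {x y : (G.twoBallSubgraph a).verts} :
    (G.twoBallSubgraph a).coe.Adj x y ↔ G.Adj x y :=
  ⟨fun h => h.2.2, fun h => ⟨x.2, y.2, h⟩⟩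

theorem exists_walk_from_center_length_le_two (x : (G.twoBallSubgraph a).verts) :
    ∃ p : (G.twoBallSubgraph a).coe.Walk ⟨a, center_mem_twoBall⟩ x, p.length ≤ 2 := by
  obtain ⟨x, rfl | hx | ⟨p, hap, hpx⟩⟩ := x
  · exact ⟨.nil, by simp⟩
  · exact ⟨(twoBallSubgraph_adj.2 hx).toWalk, by simp⟩
  · let p' : (G.twoBallSubgraph a).verts := ⟨p, Or.inr (Or.inl hap)⟩
    exact ⟨.cons (v := p') (twoBallSubgraph_adj.2 hap) (twoBallSubgraph_adj.2 hpx).toWalk,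
      by simp⟩

theorem twoBallSubgraph_connected : (G.twoBallSubgraph a).coe.Connected := by
  have hreach (x) := (exists_walk_from_center_length_le_two (G := G) (a := a) x).elim
    fun p _ => p.reachable
  have : Nonempty (G.twoBallSubgraph a).verts := ⟨⟨a, center_mem_twoBall⟩⟩
  exact ⟨fun x y => (hreach x).symm.trans (hreach y)⟩

theorem twoBallSubgraph_dist_center_le (x : (G.twoBallSubgraph a).verts) :
    (G.twoBallSubgraph a).coe.dist ⟨a, center_mem_twoBall⟩ x ≤ 2 :=
  (exists_walk_from_center_length_le_two x).elim fun p hp => (dist_le p).trans hp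

theorem twoBallSubgraph_isAcyclic (c : G.Coloring Bool)
    (huniq : ∀ x p q, x ≠ a → G.Adj a p → G.Adj p x → G.Adj a q → G.Adj q x → p = q) :
    (G.twoBallSubgraph a).coe.IsAcyclic := by
  have hfar : ∀ x ∈ G.twoBall a, x ≠ a → ¬ G.Adj a x → ∃ p, G.Adj a p ∧ G.Adj p x := by
    rintro x (h | h | h) h0 h1
    exacts [absurd h h0, absurd h h1, h]
  refine isAcyclic_of_level
    (fun x => if (x : W) = a then 0 else if G.Adj a x then 1 else 2) ?_ ?_
  · rintro ⟨u, hu⟩ ⟨v, hv⟩ huv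
    rw [twoBallSubgraph_adj] at huv
    simp only
    by_cases hu0 : u = a
    · subst hu0
      simp [huv, huv.ne']
    by_cases hv0 : v = a
    · subst hv0
      simp [huv.symm, hu0]
    by_cases hu1 : G.Adj a u <;> by_cases hv1 : G.Adj a v <;>
      simp only [hu0, hv0, hu1, hv1, if_false, if_true] <;> norm_num
    · exact c.valid huv (c.eq_of_adj_adj hu1.symm hv1)
    · obtain ⟨p, hap, hpu⟩ := hfar u hu hu0 hu1
      obtain ⟨q, haq, hqv⟩ := hfar v hv hv0 hv1
      exact c.valid huv ((c.eq_of_adj_adj hpu.symm hap.symm).trans (c.eq_of_adj_adj haq hqv))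
  · rintro ⟨u, hu⟩ ⟨w, hw⟩ ⟨v, hv⟩ huv hwv hdu hdw
    rw [twoBallSubgraph_adj] at huv hwv
    simp only at hdu hdw huv hwv ⊢
    have hd0 : ∀ x : W, (if x = a then 0 else if G.Adj a x then 1 else 2) = 0 → x = a := by
      intro x hx
      split_ifs at hx with h0
      exact h0
    have hd1 : ∀ x : W, (if x = a then 0 else if G.Adj a x then 1 else 2) = 1 → G.Adj a x := by
      intro x hx
      split_ifs at hx with h0 h1 <;> first | exact h1 | omega
    by_cases hv0 : v = a
    · simp [hv0] at hdu
    by_cases hv1 : G.Adj a v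
    · simp only [hv0, hv1, if_false, if_true] at hdu hdw
      exact Subtype.ext ((hd0 u (by omega)).trans (hd0 w (by omega)).symm)
    · simp only [hv0, hv1, if_false] at hdu hdw
      exact Subtype.ext (huniq v u w hv0 (hd1 u (by omega)) huv (hd1 w (by omega)) hwv)

/-- Both distances have the parity fixed by the 2-colouring and the ball has diameter at most 4,
so only pairs at distance 2 in `G` need an argument. -/
theorem twoBallSubgraph_isIsometric (c : G.Coloring Bool)
    (hout : ∀ w x y, w ∉ G.twoBall a → x ∈ G.twoBall a → y ∈ G.twoBall a →
      G.Adj x w → G.Adj y w → x = y) :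
    (G.twoBallSubgraph a).IsIsometric := by
  intro x y
  have hconn : (G.twoBallSubgraph a).coe.Connected := twoBallSubgraph_connected
  obtain ⟨p, hp⟩ := hconn.exists_walk_length_eq_dist x y
  obtain ⟨q, hq⟩ : ∃ q : G.Walk x y, q.length = G.dist x y :=
    Reachable.exists_walk_length_eq_dist ⟨p.map (G.twoBallSubgraph a).hom⟩
  have hGT : G.dist x y ≤ (G.twoBallSubgraph a).coe.dist x y := by
    rw [← hp, ← Walk.length_map (G.twoBallSubgraph a).hom]
    exact dist_le _
  have hparity : Even ((G.twoBallSubgraph a).coe.dist x y) ↔ Even (G.dist x y) := by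
    rw [← hp, ← hq, Coloring.even_length_iff_congr (c.comp (G.twoBallSubgraph a).hom),
      c.even_length_iff_congr]
    rfl
  have hdiam : (G.twoBallSubgraph a).coe.dist x y ≤ 4 := by
    have := hconn.dist_triangle (u := x) (v := ⟨a, center_mem_twoBall⟩) (w := y)
    have hx := twoBallSubgraph_dist_center_le x
    have hy := twoBallSubgraph_dist_center_le y
    rw [dist_comm] at hx
    omega
  have hshort : G.dist x y ≤ 2 → (G.twoBallSubgraph a).coe.dist x y ≤ G.dist x y := by
    intro h2
    rcases (by omega : q.length = 0 ∨ q.length = 1 ∨ q.length = 2) with h | h | h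
    · rw [← hq, h, Subtype.ext (Walk.eq_of_length_eq_zero h), dist_self]
    · rw [← hq, h]
      exact dist_le (twoBallSubgraph_adj.2 (Walk.adj_of_length_eq_one h)).toWalk
    · have hxw := q.adj_getVert_succ (i := 0) (by omega)
      have hwy := q.adj_getVert_succ (i := 1) (by omega)
      rw [Walk.getVert_zero] at hxw
      rw [show 1 + 1 = q.length by omega, Walk.getVert_length] at hwy
      by_cases hw : q.getVert 1 ∈ G.twoBall a
      · rw [← hq, h]
        exact dist_le ((twoBallSubgraph_adj (y := ⟨_, hw⟩)).2 hxw |>.toWalk.append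
          ((twoBallSubgraph_adj (x := ⟨_, hw⟩)).2 hwy).toWalk) |>.trans (by simp)
      · have hxy := hout _ x y hw x.2 y.2 hxw hwy.symm
        have : G.dist (x : W) y = 0 := by rw [hxy]; exact dist_self
        omega
  refine le_antisymm ?_ hGT
  by_cases h2 : G.dist x y ≤ 2
  · exact hshort h2
  · rw [Nat.even_iff, Nat.even_iff] at hparity
    omega

end SimpleGraph

theorem graphRadius_eq_of_dist_le {U : Type} {H : SimpleGraph U} (hH : H.Connected) {r : ℕ}
    (c : U) (hc : ∀ v, H.dist c v ≤ r) {x y : U} (hxy : 2 * r ≤ H.dist x y) :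
    graphRadius H = r := by
  refine le_antisymm (Nat.sInf_le ⟨c, hc⟩) (le_csInf ⟨r, c, hc⟩ ?_)
  rintro n ⟨u, hu⟩
  have := hH.dist_triangle (u := x) (v := u) (w := y)
  have hx := hu x
  have := hu y
  rw [dist_comm] at hx
  omega

section Subdivision

open Sum

variable {V : Type} (X : SimpleGraph V)

noncomputable def edgeFst (e : X.edgeSet) : V := (Quot.out (e : Sym2 V)).1

noncomputable def edgeSnd (e : X.edgeSet) : V := (Quot.out (e : Sym2 V)).2

variable {X}

theorem mk_edgeFst_edgeSnd (e : X.edgeSet) : s(edgeFst X e, edgeSnd X e) = e :=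
  Quot.out_eq _

theorem adj_edgeFst_edgeSnd (e : X.edgeSet) : X.Adj (edgeFst X e) (edgeSnd X e) := by
  rw [← mem_edgeSet, mk_edgeFst_edgeSnd]
  exact e.2

variable {c : ℕ}

theorem csubdivision_adj_inl_inr {u : V} {e : X.edgeSet} {k : Fin c} :
    (csubdivision X c).Adj (inl u) (inr (e, k)) ↔
      (u = edgeFst X e ∧ k.val = 0) ∨ (u = edgeSnd X e ∧ k.val = c - 1) := by
  simp [csubdivision, edgeFst, edgeSnd]

theorem csubdivision_adj_inr_inr {e e' : X.edgeSet} {k k' : Fin c} :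
    (csubdivision X c).Adj (inr (e, k)) (inr (e', k')) ↔
      e = e' ∧ (k.val + 1 = k'.val ∨ k'.val + 1 = k.val) := by
  simp only [csubdivision, fromRel_adj, ne_eq, reduceCtorEq, false_and, exists_false,
    Sum.inr.injEq, Prod.mk.injEq, false_or, not_and]
  constructor
  · rintro ⟨-, ⟨_, _, _, ⟨rfl, rfl⟩, ⟨rfl, rfl⟩, h⟩ | ⟨_, _, _, ⟨rfl, rfl⟩, ⟨rfl, rfl⟩, h⟩⟩ <;>
      simp [h]
  · rintro ⟨rfl, h⟩
    refine ⟨fun _ hk => by rw [hk] at h; omega, ?_⟩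
    rcases h with h | h
    exacts [Or.inl ⟨_, _, _, ⟨rfl, rfl⟩, ⟨rfl, rfl⟩, h⟩, Or.inr ⟨_, _, _, ⟨rfl, rfl⟩, ⟨rfl, rfl⟩, h⟩]

theorem not_csubdivision_adj_inl_inl {u u' : V} :
    ¬ (csubdivision X c).Adj (inl u) (inl u') := by
  simp [csubdivision]

end Subdivision

namespace ApexConstruction

open Sum

variable {V : Type} (X : SimpleGraph V) (κ : ℕ)

/-- The vertices of the 5-subdivision, and for every colour `c` a path
`(c, 0) - (c, 1) - (c, 2) - (c, 3) - (c, 4)` whose middle vertex `(c, 2)` is the apex of `c`. -/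
abbrev Vertex := (V ⊕ (X.edgeSet × Fin 5)) ⊕ (Fin (κ + 1) × Fin 5)

variable {κ} (φ : V → Sym2 V → Fin κ)

/-- `some i` when the subdivision vertex is joined to apex `i`. Positions `0` and `4` on `e` are
next to `edgeFst X e` and `edgeSnd X e`. -/
noncomputable def apexColor (m : X.edgeSet × Fin 5) : Option (Fin (κ + 1)) :=
  if m.2.val = 0 then some (φ (edgeFst X m.1) m.1).castSucc
  else if m.2.val = 4 then some (φ (edgeSnd X m.1) m.1).castSucc
  else if m.2.val = 2 then some (Fin.last κ)
  else none

def apexGraph : SimpleGraph (Vertex X κ) where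
  Adj
    | inl p, inl q => (csubdivision X 5).Adj p q
    | inl (inr m), inr (c, k) | inr (c, k), inl (inr m) => k.val = 2 ∧ apexColor X φ m = some c
    | inr (c, k), inr (d, l) => c = d ∧ (pathGraph 5).Adj k l
    | _, _ => False
  symm := ⟨by
    rintro ((u | m) | ⟨c, k⟩) ((u' | m') | ⟨d, l⟩) h
    all_goals first
      | exact h
      | exact SimpleGraph.Adj.symm h
      | exact ⟨h.1.symm, h.2.symm⟩⟩
  loopless := ⟨by
    rintro ((u | m) | ⟨c, k⟩) h
    exacts [h.ne rfl, h.ne rfl, h.2.ne rfl]⟩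

def apex (i : Fin (κ + 1)) : Vertex X κ := inr (i, 2)

variable {X φ}

theorem apexColor_eq_some {m : X.edgeSet × Fin 5} {i : Fin (κ + 1)}
    (h : apexColor X φ m = some i) :
    ((m.2.val = 0 ∨ m.2.val = 4) ∧ i ≠ Fin.last κ) ∨ (m.2.val = 2 ∧ i = Fin.last κ) := by
  unfold apexColor at h
  split_ifs at h <;> cases h <;> simp_all [Fin.castSucc_ne_last]

theorem exists_apexColor_eq_some {m : X.edgeSet × Fin 5} (h : m.2.val % 2 = 0) :
    ∃ i, apexColor X φ m = some i := by
  unfold apexColor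
  split_ifs <;> first | exact ⟨_, rfl⟩ | omega

theorem apexColor_of_csubdivision_adj {u : V} {e : X.edgeSet} {k : Fin 5}
    (h : (csubdivision X 5).Adj (inl u) (inr (e, k))) :
    ∃ w, X.Adj u w ∧ (e : Sym2 V) = s(u, w) ∧ apexColor X φ (e, k) = some (φ u e).castSucc := by
  rcases csubdivision_adj_inl_inr.1 h with ⟨rfl, hk⟩ | ⟨rfl, hk⟩
  · exact ⟨_, adj_edgeFst_edgeSnd e, (mk_edgeFst_edgeSnd e).symm, by simp [apexColor, hk]⟩
  · refine ⟨_, (adj_edgeFst_edgeSnd e).symm, by rw [Sym2.eq_swap, mk_edgeFst_edgeSnd], ?_⟩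
    simp [apexColor, show k.val = 4 by omega]

theorem apexColor_ne_last_of_csubdivision_adj {m : X.edgeSet × Fin 5} {u : V} {i : Fin (κ + 1)}
    (hm : apexColor X φ m = some i) (h : (csubdivision X 5).Adj (inl u) (inr m)) :
    i ≠ Fin.last κ := by
  have := csubdivision_adj_inl_inr.1 h
  rcases apexColor_eq_some hm with ⟨-, hi⟩ | ⟨hk, -⟩
  · exact hi
  · omega

theorem not_csubdivision_adj_of_apexColor {m n : X.edgeSet × Fin 5} {i c : Fin (κ + 1)}
    (hm : apexColor X φ m = some i) (hn : apexColor X φ n = some c) :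
    ¬ (csubdivision X 5).Adj (inr m) (inr n) := by
  obtain ⟨e, k⟩ := m
  obtain ⟨f, l⟩ := n
  intro h
  have := (csubdivision_adj_inr_inr.1 h).2
  rcases apexColor_eq_some hm with ⟨hk, -⟩ | ⟨hk, -⟩ <;>
    rcases apexColor_eq_some hn with ⟨hl, -⟩ | ⟨hl, -⟩ <;> dsimp only at hk hl <;> omega

theorem eq_of_csubdivision_adj_adj_of_adj_inl {m m' n z : X.edgeSet × Fin 5} {u : V}
    {i : Fin (κ + 1)} (hm : apexColor X φ m = some i) (hm' : apexColor X φ m' = some i)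
    (hmu : (csubdivision X 5).Adj (inl u) (inr m)) (hun : (csubdivision X 5).Adj (inl u) (inr n))
    (hm'z : (csubdivision X 5).Adj (inr m') (inr z))
    (hzn : (csubdivision X 5).Adj (inr z) (inr n)) :
    m' = n := by
  have hi := apexColor_ne_last_of_csubdivision_adj hm hmu
  obtain ⟨f, l⟩ := n
  obtain ⟨g, p⟩ := z
  obtain ⟨e', k'⟩ := m'
  obtain ⟨rfl, hpl⟩ := csubdivision_adj_inr_inr.1 hzn
  obtain ⟨rfl, hkp⟩ := csubdivision_adj_inr_inr.1 hm'z
  have hl := csubdivision_adj_inl_inr.1 hun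
  rcases apexColor_eq_some hm' with ⟨hk', -⟩ | ⟨-, hi'⟩
  · congr 1
    ext
    dsimp only at hk'
    omega
  · exact absurd hi' hi

section Proper

variable (hφ : IsProperIncidenceColoring X φ)
include hφ

theorem apexColor_zero_ne_four {e : X.edgeSet} {k k' : Fin 5} (hk : k.val = 0)
    (hk' : k'.val = 4) : apexColor X φ (e, k) ≠ apexColor X φ (e, k') := by
  have := hφ.1 _ _ (adj_edgeFst_edgeSnd e)
  rw [mk_edgeFst_edgeSnd] at this
  simpa [apexColor, hk, hk'] using this

theorem eq_of_csubdivision_adj_inl {u : V} {m m' : X.edgeSet × Fin 5} {i : Fin (κ + 1)}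
    (hm : apexColor X φ m = some i) (hm' : apexColor X φ m' = some i)
    (h : (csubdivision X 5).Adj (inl u) (inr m)) (h' : (csubdivision X 5).Adj (inl u) (inr m')) :
    m = m' := by
  obtain ⟨e, k⟩ := m
  obtain ⟨e', k'⟩ := m'
  obtain ⟨w, huw, he, hc⟩ := apexColor_of_csubdivision_adj (φ := φ) h
  obtain ⟨w', huw', he', hc'⟩ := apexColor_of_csubdivision_adj (φ := φ) h'
  have hφe : φ u e = φ u e' := Fin.castSucc_injective _ <|
    Option.some_injective _ ((hc.symm.trans hm).trans (hc'.symm.trans hm').symm)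
  obtain rfl : w = w' := by
    by_contra hne
    exact hφ.2 u w w' huw huw' hne (by rwa [← he, ← he'])
  obtain rfl : e = e' := Subtype.ext (he.trans he'.symm)
  rcases csubdivision_adj_inl_inr.1 h with ⟨hu, hk⟩ | ⟨hu, hk⟩ <;>
    rcases csubdivision_adj_inl_inr.1 h' with ⟨hu', hk'⟩ | ⟨hu', hk'⟩
  all_goals first
    | simp only [Prod.mk.injEq, true_and]; exact Fin.ext (by omega)
    | exact absurd (hu.symm.trans hu') (adj_edgeFst_edgeSnd e).ne
    | exact absurd (hu'.symm.trans hu) (adj_edgeFst_edgeSnd e).ne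

theorem eq_of_csubdivision_adj_of_apexColor {m m' : X.edgeSet × Fin 5}
    {z : V ⊕ (X.edgeSet × Fin 5)} {i : Fin (κ + 1)}
    (hm : apexColor X φ m = some i) (hm' : apexColor X φ m' = some i)
    (h : (csubdivision X 5).Adj (inr m) z) (h' : (csubdivision X 5).Adj (inr m') z) : m = m' := by
  rcases z with u | ⟨f, l⟩
  · exact eq_of_csubdivision_adj_inl hφ hm hm' h.symm h'.symm
  obtain ⟨e, k⟩ := m
  obtain ⟨e', k'⟩ := m'
  obtain ⟨rfl, hkl⟩ := csubdivision_adj_inr_inr.1 h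
  obtain ⟨rfl, hk'l⟩ := csubdivision_adj_inr_inr.1 h'
  rcases apexColor_eq_some hm with ⟨hk, hi⟩ | ⟨hk, hi⟩ <;>
    rcases apexColor_eq_some hm' with ⟨hk', hi'⟩ | ⟨hk', hi'⟩ <;> dsimp only at hk hk'
  all_goals first
    | exact absurd hi' hi
    | exact absurd hi hi'
    | (congr 1; ext; omega)

theorem eq_of_csubdivision_adj_adj {m m' : X.edgeSet × Fin 5}
    {z z₁ z' : V ⊕ (X.edgeSet × Fin 5)} {i : Fin (κ + 1)}
    (hm : apexColor X φ m = some i) (hm' : apexColor X φ m' = some i)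
    (hmz : (csubdivision X 5).Adj (inr m) z) (hz : (csubdivision X 5).Adj z z')
    (hm'z : (csubdivision X 5).Adj (inr m') z₁) (hz₁ : (csubdivision X 5).Adj z₁ z')
    (hz' : ∀ n, z' = inr n → apexColor X φ n ≠ some i) : z = z₁ := by
  obtain ⟨e, k⟩ := m
  obtain ⟨e', k'⟩ := m'
  rcases z' with u' | n
  · rcases z with u | ⟨f, l⟩
    · exact absurd hz not_csubdivision_adj_inl_inl
    have := csubdivision_adj_inl_inr.1 hz.symm
    obtain ⟨-, hkl⟩ := csubdivision_adj_inr_inr.1 hmz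
    rcases apexColor_eq_some hm with ⟨hk, -⟩ | ⟨hk, -⟩ <;> dsimp only at hk <;> omega
  have hn := hz' n rfl
  rcases z with u | ⟨f, l⟩ <;> rcases z₁ with u₁ | ⟨f₁, l₁⟩
  · rcases csubdivision_adj_inl_inr.1 hz with ⟨rfl, h⟩ | ⟨rfl, h⟩ <;>
      rcases csubdivision_adj_inl_inr.1 hz₁ with ⟨rfl, h₁⟩ | ⟨rfl, h₁⟩ <;> first | rfl | omega
  · exact (hn (eq_of_csubdivision_adj_adj_of_adj_inl hm hm' hmz.symm hz hm'z hz₁ ▸ hm')).elim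
  · exact (hn (eq_of_csubdivision_adj_adj_of_adj_inl hm' hm hm'z.symm hz₁ hmz hz ▸ hm)).elim
  obtain ⟨g, p⟩ := n
  obtain ⟨rfl, hlp⟩ := csubdivision_adj_inr_inr.1 hz
  obtain ⟨rfl, hl₁p⟩ := csubdivision_adj_inr_inr.1 hz₁
  obtain ⟨rfl, hkl⟩ := csubdivision_adj_inr_inr.1 hmz
  obtain ⟨rfl, hk'l₁⟩ := csubdivision_adj_inr_inr.1 hm'z
  have hkp : k.val ≠ p.val := fun h => hn (by rwa [← Fin.ext h])
  have hk'p : k'.val ≠ p.val := fun h => hn (by rwa [← Fin.ext h])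
  by_cases hll : l = l₁
  · rw [hll]
  exfalso
  have hll' : l.val ≠ l₁.val := fun h => hll (Fin.ext h)
  rcases (by omega : (k.val = 0 ∧ k'.val = 4) ∨ (k.val = 4 ∧ k'.val = 0)) with
    ⟨h0, h4⟩ | ⟨h4, h0⟩
  · exact apexColor_zero_ne_four hφ h0 h4 (hm.trans hm'.symm)
  · exact apexColor_zero_ne_four hφ h0 h4 (hm'.trans hm.symm)

end Proper

@[simp] theorem apexGraph_adj_inr_inl {m : X.edgeSet × Fin 5} {c : Fin (κ + 1)} {k : Fin 5} :
    (apexGraph X φ).Adj (inr (c, k)) (inl (inr m)) ↔ k.val = 2 ∧ apexColor X φ m = some c :=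
  Iff.rfl

@[simp] theorem apexGraph_adj_inr_inr {c d : Fin (κ + 1)} {k l : Fin 5} :
    (apexGraph X φ).Adj (inr (c, k)) (inr (d, l)) ↔ c = d ∧ (pathGraph 5).Adj k l := Iff.rfl

@[simp] theorem not_apexGraph_adj_inl_inl_inr {u : V} {x : Fin (κ + 1) × Fin 5} :
    ¬ (apexGraph X φ).Adj (inl (inl u)) (inr x) := id

@[simp] theorem not_apexGraph_adj_inr_inl_inl {u : V} {x : Fin (κ + 1) × Fin 5} :
    ¬ (apexGraph X φ).Adj (inr x) (inl (inl u)) := id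

theorem apexGraph_adj_apex {i : Fin (κ + 1)} {x : Vertex X κ} :
    (apexGraph X φ).Adj (apex X i) x ↔
      (∃ m, x = inl (inr m) ∧ apexColor X φ m = some i) ∨
      ∃ k : Fin 5, x = inr (i, k) ∧ (k.val = 1 ∨ k.val = 3) := by
  rcases x with (u | m) | ⟨c, k⟩
  · simp [apex]
  · simp [apex]
  · simp only [apex, apexGraph_adj_inr_inr, pathGraph_adj, reduceCtorEq, false_and,
      exists_false, inr.injEq, Prod.mk.injEq, false_or]
    constructor
    · rintro ⟨rfl, h⟩
      exact ⟨k, ⟨rfl, rfl⟩, by simp at h; omega⟩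
    · rintro ⟨k, ⟨rfl, rfl⟩, h⟩
      exact ⟨rfl, by simp; omega⟩

theorem eq_apex_of_adj_inl_inr {i c : Fin (κ + 1)} {m : X.edgeSet × Fin 5} {k : Fin 5}
    (hm : apexColor X φ m = some i) (h : (apexGraph X φ).Adj (inl (inr m)) (inr (c, k))) :
    inr (c, k) = apex X i := by
  obtain ⟨hk, hc⟩ := h
  rw [hm, Option.some_inj] at hc
  rw [apex, hc, show k = 2 from Fin.ext hk]

theorem inr_mem_twoBall_apex (i : Fin (κ + 1)) (k : Fin 5) :
    (inr (i, k) : Vertex X κ) ∈ (apexGraph X φ).twoBall (apex X i) := by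
  have h21 : (apexGraph X φ).Adj (apex X i) (inr (i, 1)) := ⟨rfl, by simp [pathGraph_adj]⟩
  have h23 : (apexGraph X φ).Adj (apex X i) (inr (i, 3)) := ⟨rfl, by simp [pathGraph_adj]⟩
  fin_cases k
  · exact Or.inr (Or.inr ⟨_, h21, rfl, by simp [pathGraph_adj]⟩)
  · exact Or.inr (Or.inl h21)
  · exact Or.inl rfl
  · exact Or.inr (Or.inl h23)
  · exact Or.inr (Or.inr ⟨_, h23, rfl, by simp [pathGraph_adj]⟩)

def side : Vertex X κ → Bool
  | inl (inl _) => false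
  | inl (inr (_, k)) => decide (k.val % 2 = 0)
  | inr (_, k) => decide (k.val % 2 = 1)

variable (X φ) in
def sideColoring : (apexGraph X φ).Coloring Bool :=
  Coloring.mk side <| by
    rintro ((u | ⟨e, k⟩) | ⟨c, k⟩) ((u' | ⟨e', k'⟩) | ⟨d, l⟩) h
    · exact absurd h not_csubdivision_adj_inl_inl
    · have := csubdivision_adj_inl_inr.1 h
      simp [side]; omega
    · exact absurd h not_apexGraph_adj_inl_inl_inr
    · have := csubdivision_adj_inl_inr.1 h.symm
      simp [side]; omega
    · have := (csubdivision_adj_inr_inr.1 h).2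
      simp [side]; omega
    · have := h.1
      rcases apexColor_eq_some h.2 with ⟨hk, -⟩ | ⟨hk, -⟩ <;> dsimp only at hk <;> simp [side] <;>
        omega
    · exact absurd h not_apexGraph_adj_inr_inl_inl
    · have := h.1
      rcases apexColor_eq_some h.2 with ⟨hk, -⟩ | ⟨hk, -⟩ <;> dsimp only at hk <;> simp [side] <;>
        omega
    · have := pathGraph_adj.1 h.2
      simp [side]; omega

theorem exists_adj_apex_of_side {v : Vertex X κ} (hv : side v = true) :
    ∃ i, (apexGraph X φ).Adj (apex X i) v := by
  rcases v with (u | ⟨e, k⟩) | ⟨c, k⟩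
  · simp [side] at hv
  · obtain ⟨i, hi⟩ := exists_apexColor_eq_some (X := X) (φ := φ) (m := (e, k))
      (by simpa [side] using hv)
    exact ⟨i, rfl, hi⟩
  · have : k.val % 2 = 1 := by simpa [side] using hv
    exact ⟨c, rfl, pathGraph_adj.2 (by simp; omega)⟩

theorem edgeCover_twoBallSubgraph_apex :
    EdgeCover fun i => (apexGraph X φ).twoBallSubgraph (apex X i) := by
  intro x y h
  have hside : side x ≠ side y := (sideColoring X φ).valid h
  obtain ⟨i, hi⟩ | ⟨i, hi⟩ : (∃ i, (apexGraph X φ).Adj (apex X i) x) ∨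
      ∃ i, (apexGraph X φ).Adj (apex X i) y := by
    cases hx : side x
    · rw [hx, ne_eq, eq_comm, Bool.not_eq_false] at hside
      exact Or.inr (exists_adj_apex_of_side hside)
    · exact Or.inl (exists_adj_apex_of_side hx)
  · exact ⟨i, Or.inr (Or.inl hi), Or.inr (Or.inr ⟨x, hi, h⟩), h⟩
  · exact ⟨i, Or.inr (Or.inr ⟨y, hi, h.symm⟩), Or.inr (Or.inl hi), h⟩

theorem apexGraph_parent_unique (hφ : IsProperIncidenceColoring X φ) {i : Fin (κ + 1)}
    {x p q : Vertex X κ} (hx : x ≠ apex X i) (hp : (apexGraph X φ).Adj (apex X i) p)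
    (hpx : (apexGraph X φ).Adj p x) (hq : (apexGraph X φ).Adj (apex X i) q)
    (hqx : (apexGraph X φ).Adj q x) : p = q := by
  rw [apexGraph_adj_apex] at hp hq
  rcases hp with ⟨m, rfl, hm⟩ | ⟨k, rfl, hk⟩ <;> rcases hq with ⟨m', rfl, hm'⟩ | ⟨k', rfl, hk'⟩ <;>
    rcases x with z | ⟨c, l⟩
  · rw [eq_of_csubdivision_adj_of_apexColor hφ hm hm' hpx hqx]
  · exact absurd (eq_apex_of_adj_inl_inr hm hpx) hx
  · rcases z with u | n
    · exact absurd hqx not_apexGraph_adj_inr_inl_inl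
    · have := hqx.1
      omega
  · exact absurd (eq_apex_of_adj_inl_inr hm hpx) hx
  · rcases z with u | n
    · exact absurd hpx not_apexGraph_adj_inr_inl_inl
    · have := hpx.1
      omega
  · exact absurd (eq_apex_of_adj_inl_inr hm' hqx) hx
  · rcases z with u | n
    · exact absurd hpx not_apexGraph_adj_inr_inl_inl
    · have := hpx.1
      omega
  · obtain ⟨rfl, hkl⟩ := hpx
    obtain ⟨-, hk'l⟩ := hqx
    rw [pathGraph_adj] at hkl hk'l
    by_cases hl : l.val = 2
    · exact absurd (by rw [apex, show l = 2 from Fin.ext hl]) hx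
    · congr 2
      ext
      omega

theorem exists_of_adj_not_mem_twoBall {i : Fin (κ + 1)} {w x : Vertex X κ}
    (hw : w ∉ (apexGraph X φ).twoBall (apex X i)) (hx : x ∈ (apexGraph X φ).twoBall (apex X i))
    (hxw : (apexGraph X φ).Adj x w) :
    ∃ m z z', apexColor X φ m = some i ∧ x = inl z ∧ w = inl z' ∧
      (csubdivision X 5).Adj (inr m) z ∧ (csubdivision X 5).Adj z z' := by
  have hx0 : x ≠ apex X i := by
    rintro rfl
    exact hw (Or.inr (Or.inl hxw))
  obtain ⟨p, hap, hpx⟩ : ∃ p, (apexGraph X φ).Adj (apex X i) p ∧ (apexGraph X φ).Adj p x := by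
    rcases hx with h | h | h
    exacts [absurd h hx0, absurd (Or.inr (Or.inr ⟨x, h, hxw⟩)) hw, h]
  rcases apexGraph_adj_apex.1 hap with ⟨m, rfl, hm⟩ | ⟨k, rfl, hk⟩
  · rcases x with z | ⟨c, l⟩
    · rcases w with z' | ⟨c, l⟩
      · exact ⟨m, z, z', hm, rfl, rfl, hpx, hxw⟩
      rcases z with u | n
      · exact absurd hxw not_apexGraph_adj_inl_inl_inr
      · exact absurd hpx (not_csubdivision_adj_of_apexColor hm hxw.2)
    · exact absurd (eq_apex_of_adj_inl_inr hm hpx) hx0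
  · rcases x with (u | n) | ⟨c, l⟩
    · exact absurd hpx not_apexGraph_adj_inr_inl_inl
    · have := hpx.1
      omega
    obtain ⟨rfl, -⟩ := hpx
    rcases w with (u | n) | ⟨c, l'⟩
    · exact absurd hxw not_apexGraph_adj_inr_inl_inl
    · exact absurd (by rw [apex, show l = 2 from Fin.ext hxw.1]) hx0
    · obtain ⟨rfl, -⟩ := hxw
      exact absurd (inr_mem_twoBall_apex _ _) hw

theorem apexGraph_eq_of_adj_of_not_mem_twoBall (hφ : IsProperIncidenceColoring X φ)
    {i : Fin (κ + 1)} (w x y : Vertex X κ) (hw : w ∉ (apexGraph X φ).twoBall (apex X i))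
    (hx : x ∈ (apexGraph X φ).twoBall (apex X i)) (hy : y ∈ (apexGraph X φ).twoBall (apex X i))
    (hxw : (apexGraph X φ).Adj x w) (hyw : (apexGraph X φ).Adj y w) : x = y := by
  obtain ⟨m, z, z', hm, rfl, rfl, hmz, hzz'⟩ := exists_of_adj_not_mem_twoBall hw hx hxw
  obtain ⟨m', z₁, z₁', hm', rfl, hw', hm'z, hz₁⟩ := exists_of_adj_not_mem_twoBall hw hy hyw
  cases inl_injective hw'
  rw [eq_of_csubdivision_adj_adj hφ hm hm' hmz hzz' hm'z hz₁ fun n hn hni => hw ?_]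
  exact Or.inr (Or.inl (hn ▸ ⟨rfl, hni⟩))

def pendantCoord (i : Fin (κ + 1)) : Vertex X κ → ℤ
  | inr (c, k) => if c = i then k.val else 2
  | inl _ => 2

theorem abs_pendantCoord_sub_le (i : Fin (κ + 1)) {x y : Vertex X κ}
    (h : (apexGraph X φ).Adj x y) : |pendantCoord i x - pendantCoord i y| ≤ 1 := by
  rcases x with p | ⟨c, k⟩ <;> rcases y with q | ⟨d, l⟩
  · simp [pendantCoord]
  · rcases p with u | m
    · exact absurd h not_apexGraph_adj_inl_inl_inr
    · simp [pendantCoord, h.1]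
  · rcases q with u | m
    · exact absurd h not_apexGraph_adj_inr_inl_inl
    · simp [pendantCoord, h.1]
  · obtain ⟨rfl, hkl⟩ := h
    have := pathGraph_adj.1 hkl
    simp only [pendantCoord]
    split_ifs
    · rw [abs_le]
      omega
    · simp

theorem four_le_dist_pendant (i : Fin (κ + 1)) :
    4 ≤ (apexGraph X φ).dist (inr (i, 0)) (inr (i, 4)) := by
  have hadj (k l : Fin 5) (h : k.val + 1 = l.val) :
      (apexGraph X φ).Adj (inr (i, k)) (inr (i, l)) :=
    ⟨rfl, pathGraph_adj.2 (Or.inl h)⟩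
  have hreach : (apexGraph X φ).Reachable (inr (i, 0)) (inr (i, 4)) :=
    (hadj 0 1 rfl).reachable.trans <| (hadj 1 2 rfl).reachable.trans <|
      (hadj 2 3 rfl).reachable.trans (hadj 3 4 rfl).reachable
  have := hreach.abs_sub_le_dist fun _ _ => abs_pendantCoord_sub_le i
  simp [pendantCoord] at this
  omega

variable (X φ) in
noncomputable def inducedSubdivisionIso :
    (apexGraph X φ).induce (Set.range inl) ≃g csubdivision X 5 :=
  Iso.symm ⟨Equiv.ofInjective _ inl_injective, Iff.rfl⟩

variable (hφ : IsProperIncidenceColoring X φ) (i : Fin (κ + 1))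
include hφ

theorem isIsometric_twoBallSubgraph_apex :
    ((apexGraph X φ).twoBallSubgraph (apex X i)).IsIsometric :=
  twoBallSubgraph_isIsometric (sideColoring X φ) (apexGraph_eq_of_adj_of_not_mem_twoBall hφ)

theorem isTree_twoBallSubgraph_apex :
    ((apexGraph X φ).twoBallSubgraph (apex X i)).coe.IsTree :=
  ⟨twoBallSubgraph_connected, twoBallSubgraph_isAcyclic (sideColoring X φ)
    fun _ _ _ hx => apexGraph_parent_unique hφ hx⟩

theorem graphRadius_twoBallSubgraph_apex :
    graphRadius ((apexGraph X φ).twoBallSubgraph (apex X i)).coe = 2 := by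
  refine graphRadius_eq_of_dist_le twoBallSubgraph_connected _ twoBallSubgraph_dist_center_le
    (x := ⟨_, inr_mem_twoBall_apex i 0⟩) (y := ⟨_, inr_mem_twoBall_apex i 4⟩) ?_
  rw [isIsometric_twoBallSubgraph_apex hφ]
  exact four_le_dist_pendant i

end ApexConstruction

theorem stmt15_general {V : Type} (X : SimpleGraph V) (κ : ℕ)
    (φ : V → Sym2 V → Fin κ) (hφ : IsProperIncidenceColoring X φ) :
    ∃ (W : Type) (G : SimpleGraph W) (S : Set W),
      Nonempty ((G.induce S) ≃g csubdivision X 5) ∧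
      ∃ H : Fin (κ + 1) → G.Subgraph,
        EdgeCover H ∧
        ∀ i, (H i).IsIsometric ∧ (H i).coe.IsTree ∧ graphRadius (H i).coe = 2 :=
  ⟨ApexConstruction.Vertex X κ, ApexConstruction.apexGraph X φ, Set.range Sum.inl,
    ⟨ApexConstruction.inducedSubdivisionIso X φ⟩,
    fun i => (ApexConstruction.apexGraph X φ).twoBallSubgraph (ApexConstruction.apex X i),
    ApexConstruction.edgeCover_twoBallSubgraph_apex,
    fun i => ⟨ApexConstruction.isIsometric_twoBallSubgraph_apex hφ i,
      ApexConstruction.isTree_twoBallSubgraph_apex hφ i,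
      ApexConstruction.graphRadius_twoBallSubgraph_apex hφ i⟩⟩

theorem stmt15 {V : Type} (X : SimpleGraph V) (hX : X.Connected) (κ : ℕ)
    (φ : V → Sym2 V → Fin κ) (hφ : IsProperIncidenceColoring X φ) :
    ∃ (W : Type) (G : SimpleGraph W) (S : Set W),
      Nonempty ((G.induce S) ≃g csubdivision X 5) ∧
      ∃ H : Fin (κ + 1) → G.Subgraph,
        EdgeCover H ∧
        ∀ i, (H i).IsIsometric ∧ (H i).coe.IsTree ∧ graphRadius (H i).coe = 2 :=
  stmt15_general X κ φ hφ
end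

section
/- For every positive integer n there exists a graph Gₙ with treewidth at least n that can be edge covered by two isometric subgraphs H₁ and H₂ with H₁ ∈ Apex(P₃) and H₂ ∈ Apex(S₃^⋆); in particular td(H₁) ≤ 3 and td(H₂) ≤ 4. -/
open SimpleGraph
open scoped Classical

/-!
`G_n` is built from a graph `X_n` of maximum degree three with a `K_{n+1}` minor: its nodes form
an `(n+1) × (n+1)` array whose rows are paths, and every two rows are joined by one cross link.
Every link of `X_n` is subdivided by five vertices `s₀, …, s₄`, and two apices are added: `a₁`
adjacent to `s₁, s₂, s₃` of every link, and `a₂` adjacent to every node and to `s₀, s₁, s₃, s₄`.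
The rows, with the halves of their cross links, are still branch sets of a `K_{n+1}` minor, which
forces treewidth `≥ n` by the Helly property of subtrees of a tree. Every edge lies in the closed
neighbourhood of `a₁` or of `a₂`, and closed neighbourhoods are isometric because all their
distances are at most two, realised through the centre. Deleting `a₁` from `G[N[a₁]]` leaves the
paths `s₁s₂s₃`; deleting `a₂` from `G[N[a₂]]` leaves around each node a star with at most three
legs `s₀s₁` (or `s₄s₃`). The treedepth bounds come from explicit vertex rankings.
-/

namespace SimpleGraph

variable {V : Type} {G : SimpleGraph V}

theorem Reachable.eq_of_forall_adj {α : Type*} {σ : V → α} (hσ : ∀ x y, G.Adj x y → σ x = σ y)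
    {u v : V} (h : G.Reachable u v) : σ u = σ v := by
  obtain ⟨p⟩ := h
  induction p with
  | nil => rfl
  | cons hadj _ ih => exact (hσ _ _ hadj).trans ih

theorem connected_induce_of_exists_adj_lt {S : Set V} {r : V} (hr : r ∈ S) (φ : V → ℕ)
    (h : ∀ x ∈ S, x ≠ r → ∃ y ∈ S, G.Adj x y ∧ φ y < φ x) : (G.induce S).Connected := by
  have key (x : V) (hx : x ∈ S) : (G.induce S).Reachable ⟨x, hx⟩ ⟨r, hr⟩ := by
    induction hN : φ x using Nat.strong_induction_on generalizing x with
    | _ N ih =>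
    obtain rfl | hxr := eq_or_ne x r
    · rfl
    obtain ⟨y, hy, hxy, hlt⟩ := h x hx hxr
    exact (induce_adj.mpr hxy : (G.induce S).Adj ⟨x, hx⟩ ⟨y, hy⟩).reachable.trans
      (ih _ (hN ▸ hlt) y hy rfl)
  have : Nonempty S := ⟨⟨r, hr⟩⟩
  exact ⟨fun x y => (key x x.2).trans (key y y.2).symm⟩

theorem connected_induce_biUnion {ι : Type} {T : SimpleGraph ι} {B : Set V}
    (hB : (G.induce B).Connected) (f : V → Set ι) (hf : ∀ v ∈ B, (T.induce (f v)).Connected)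
    (hadj : ∀ u ∈ B, ∀ v ∈ B, G.Adj u v → (f u ∩ f v).Nonempty) :
    (T.induce (⋃ v ∈ B, f v)).Connected := by
  set U := ⋃ v ∈ B, f v
  have hsub {v : V} (hv : v ∈ B) : f v ⊆ U := Set.subset_biUnion_of_mem hv
  obtain ⟨v₀, hv₀⟩ := hB.nonempty
  obtain ⟨x₀, hx₀⟩ := (hf v₀ hv₀).nonempty
  have : Nonempty U := ⟨⟨x₀, hsub hv₀ hx₀⟩⟩
  let reach (v : B) : Prop :=
    ∀ y (hy : y ∈ f v), (T.induce U).Reachable ⟨x₀, hsub hv₀ hx₀⟩ ⟨y, hsub v.2 hy⟩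
  have within (v : B) {y z : ι} (hy : y ∈ f v) (hz : z ∈ f v) :
      (T.induce U).Reachable ⟨y, hsub v.2 hy⟩ ⟨z, hsub v.2 hz⟩ :=
    ((hf v v.2).preconnected ⟨y, hy⟩ ⟨z, hz⟩).map (induceHomOfLE _ (hsub v.2)).toHom
  have step (u v : B) (huv : G.Adj u v) : reach u → reach v := by
    intro hu y hy
    obtain ⟨z, hzu, hzv⟩ := hadj u u.2 v v.2 huv
    exact (hu z hzu).trans (within v hzv hy)
  have hreach (v : B) : reach v :=
    (hB.preconnected ⟨v₀, hv₀⟩ v).eq_of_forall_adj (σ := reach)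
      (fun u v h => propext ⟨step u v h, step v u h.symm⟩) ▸ fun y hy => within ⟨v₀, hv₀⟩ hx₀ hy
  refine ⟨fun a b => ?_⟩
  obtain ⟨va, hva, ha⟩ := Set.mem_iUnion₂.mp a.2
  obtain ⟨vb, hvb, hb⟩ := Set.mem_iUnion₂.mp b.2
  exact (hreach ⟨va, hva⟩ a ha).symm.trans (hreach ⟨vb, hvb⟩ b hb)

/-! ### Vertex rankings and treedepth -/

def IsRanking (G : SimpleGraph V) (f : V → ℕ) : Prop :=
  ∀ ⦃u v : V⦄, u ≠ v → f u = f v → ∀ p : G.Walk u v, ∃ w ∈ p.support, f u < f w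

theorem IsRanking.comap {W : Type} {G' : SimpleGraph W} {f : V → ℕ} (hf : G.IsRanking f)
    (φ : G' →g G) (hφ : Function.Injective φ) : G'.IsRanking (f ∘ φ) := by
  intro u v huv hfuv p
  obtain ⟨w, hw, hlt⟩ := hf (hφ.ne huv) hfuv (p.map φ)
  rw [Walk.support_map, List.mem_map] at hw
  obtain ⟨w', hw', rfl⟩ := hw
  exact ⟨w', hw', hlt⟩

theorem IsRanking.induce {f : V → ℕ} (hf : G.IsRanking f) (s : Set V) :
    (G.induce s).IsRanking fun x => f x :=
  hf.comap (Embedding.induce s).toHom Subtype.val_injective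

theorem isRanking_of_labeling {α : Type*} {f : V → ℕ} (κ : ℕ → V → α)
    (hκ : ∀ r x y, G.Adj x y → f x ≤ r → f y ≤ r → κ r x = κ r y)
    (hinj : ∀ x y, f x = f y → κ (f x) x = κ (f x) y → x = y) : G.IsRanking f := by
  intro u v huv hfuv p
  by_contra! hp
  have hreach := (p.induce {x | f x ≤ f u} hp).reachable
  exact huv <| hinj u v hfuv <| hreach.eq_of_forall_adj
    (σ := fun x : {x // f x ≤ f u} => κ (f u) x.1) fun x y h => hκ _ _ _ h x.2 y.2

theorem IsRanking.lt_of_forall_le {f : V → ℕ} (hf : G.IsRanking f) (hG : G.Preconnected)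
    {v₀ x : V} (hmax : ∀ v, f v ≤ f v₀) (hx : x ≠ v₀) : f x < f v₀ := by
  refine (hmax x).lt_of_ne fun heq => ?_
  obtain ⟨w, -, hw⟩ := hf hx heq (hG x v₀).some
  exact (hmax w).not_gt (heq ▸ hw)

theorem treedepth_le_of_isRanking [Fintype V] {f : V → ℕ} {k : ℕ} (hf : G.IsRanking f)
    (hk : ∀ v, f v < k) : treedepth G ≤ k := by
  induction hN : Fintype.card V using Nat.strong_induction_on generalizing V k with
  | _ N ih =>
  have card_lt (s : Set V) (x : V) (hx : x ∉ s) : Fintype.card s < N := by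
    rw [← hN]; convert Fintype.card_subtype_lt (p := (· ∈ s)) hx
  rw [treedepth]
  split_ifs with hV hc
  · exact Nat.zero_le k
  · -- in a connected graph the top rank is attained once; delete that vertex
    have : Nonempty V := not_isEmpty_iff.mp hV
    obtain ⟨v₀, -, hv₀⟩ := Finset.exists_max_image Finset.univ f Finset.univ_nonempty
    have hsub : treedepth (G.induce {x | x ≠ v₀}) ≤ k - 1 :=
      ih _ (card_lt _ v₀ (by simp)) (hf.induce _) (fun x => by
        have := hf.lt_of_forall_le hc.preconnected (fun v => hv₀ v (Finset.mem_univ v)) x.2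
        have := hk v₀
        omega) rfl
    have := ciInf_le_of_le (f := fun v => treedepth (G.induce {x | x ≠ v})) (OrderBot.bddBelow _)
      v₀ hsub
    have := hk v₀
    omega
  · have : Nonempty V := not_isEmpty_iff.mp hV
    refine ciSup_le fun c => ?_
    obtain ⟨x, hx⟩ : ∃ x, x ∉ c.supp := by
      by_contra! h
      exact hc ⟨fun u v => ConnectedComponent.exact ((h u).trans (h v).symm)⟩
    exact ih _ (card_lt _ x hx) (hf.induce _) (fun _ => hk _) rfl

/-! ### Subtrees of a tree and treewidth -/

section Tree

variable {ι : Type} {T : SimpleGraph ι}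

theorem IsTree.support_subset_of_connected (hT : T.IsTree) {S : Set ι}
    (hS : (T.induce S).Connected) {x y : ι} (hx : x ∈ S) (hy : y ∈ S) {p : T.Walk x y}
    (hp : p.IsPath) : ∀ z ∈ p.support, z ∈ S := by
  obtain ⟨q⟩ := hS.preconnected ⟨x, hx⟩ ⟨y, hy⟩
  let q' : T.Walk x y := q.map (Embedding.induce S).toHom
  have hpq : p = q'.bypass :=
    congrArg Subtype.val ((hT.isAcyclic.subsingleton_path x y).elim ⟨p, hp⟩ q'.toPath)
  intro z hz
  rw [hpq] at hz
  obtain ⟨z, -, rfl⟩ := List.mem_map.mp (Walk.support_map _ q ▸ q'.support_bypass_subset_support hz)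
  exact z.2

theorem IsTree.exists_median (hT : T.IsTree) {p q r : ι} {P₁ : T.Walk p q}
    {P₂ : T.Walk q r} {P₃ : T.Walk r p} (h₁ : P₁.IsPath) (h₂ : P₂.IsPath) (h₃ : P₃.IsPath) :
    ∃ m ∈ P₁.support, m ∈ P₂.support ∧ m ∈ P₃.support := by
  classical
  -- `m` is the first vertex of `P₃` on `P₁`: then `P₃` up to `m` followed by `P₁` from `m` is a
  -- path from `r` to `q`, hence it is `P₂` reversed
  obtain ⟨m, hm₁, hm₃, hfirst⟩ := P₃.exists_mem_support_forall_mem_support_imp_eq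
    P₁.support.toFinset ⟨p, by simp [Walk.end_mem_support]⟩
  rw [List.mem_toFinset] at hm₁
  set W₁ := P₃.takeUntil m hm₃
  set W₂ := P₁.dropUntil m hm₁
  have hW : (W₁.append W₂).IsPath := by
    rw [Walk.isPath_def, Walk.support_append, List.nodup_append]
    refine ⟨(h₃.takeUntil hm₃).support_nodup, (h₁.dropUntil hm₁).support_nodup.sublist
      (List.tail_sublist _), fun z hz₁ z' hz₂ hzz' => ?_⟩
    subst hzz'
    have hzm : z = m := hfirst z (List.mem_toFinset.mpr <|
      Walk.support_dropUntil_subset_support _ _ (List.mem_of_mem_tail hz₂)) hz₁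
    subst hzm
    have hnd := (h₁.dropUntil hm₁).support_nodup
    rw [← Walk.cons_tail_support W₂] at hnd
    exact (List.nodup_cons.mp hnd).1 hz₂
  have hW₂ : (⟨W₁.append W₂, hW⟩ : T.Path r q) = ⟨P₂.reverse, h₂.reverse⟩ :=
    (hT.isAcyclic.subsingleton_path r q).elim _ _
  have hm₂ : m ∈ (W₁.append W₂).support :=
    (Walk.mem_support_append_iff _ _).mpr (Or.inl (Walk.end_mem_support _))
  replace hm₂ : m ∈ P₂.reverse.support := congrArg (fun P : T.Path r q => P.1.support) hW₂ ▸ hm₂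
  exact ⟨m, hm₁, by simpa using hm₂, hm₃⟩

theorem IsTree.inter_inter_nonempty (hT : T.IsTree) {S₀ S₁ S₂ : Set ι}
    (h₀ : (T.induce S₀).Connected) (h₁ : (T.induce S₁).Connected)
    (h₂ : (T.induce S₂).Connected) (h₀₁ : (S₀ ∩ S₁).Nonempty) (h₁₂ : (S₁ ∩ S₂).Nonempty)
    (h₂₀ : (S₂ ∩ S₀).Nonempty) : (S₀ ∩ S₁ ∩ S₂).Nonempty := by
  obtain ⟨p, hp₀, hp₁⟩ := h₀₁
  obtain ⟨q, hq₁, hq₂⟩ := h₁₂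
  obtain ⟨r, hr₂, hr₀⟩ := h₂₀
  obtain ⟨P₁, hP₁⟩ := (hT.connected.preconnected p q).exists_isPath
  obtain ⟨P₂, hP₂⟩ := (hT.connected.preconnected q r).exists_isPath
  obtain ⟨P₃, hP₃⟩ := (hT.connected.preconnected r p).exists_isPath
  obtain ⟨m, hm₁, hm₂, hm₃⟩ := hT.exists_median hP₁ hP₂ hP₃
  exact ⟨m, ⟨hT.support_subset_of_connected h₀ hr₀ hp₀ hP₃ m hm₃,
    hT.support_subset_of_connected h₁ hp₁ hq₁ hP₁ m hm₁⟩,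
    hT.support_subset_of_connected h₂ hq₂ hr₂ hP₂ m hm₂⟩

theorem IsTree.connected_induce_inter (hT : T.IsTree) {S S' : Set ι}
    (hS : (T.induce S).Connected) (hS' : (T.induce S').Connected) (hne : (S ∩ S').Nonempty) :
    (T.induce (S ∩ S')).Connected := by
  have : Nonempty ↥(S ∩ S') := hne.to_subtype
  refine ⟨fun a b => ?_⟩
  obtain ⟨P, hP⟩ := (hT.connected.preconnected a b).exists_isPath
  exact (P.induce (S ∩ S') fun z hz => ⟨hT.support_subset_of_connected hS a.2.1 b.2.1 hP z hz,
    hT.support_subset_of_connected hS' a.2.2 b.2.2 hP z hz⟩).reachable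

/-- Helly property of subtrees. -/
theorem IsTree.exists_forall_mem_of_pairwise_inter_nonempty (hT : T.IsTree) {κ : Type}
    [Fintype κ] [Nonempty κ] (S : κ → Set ι) (hS : ∀ i, (T.induce (S i)).Connected)
    (hpair : ∀ i j, (S i ∩ S j).Nonempty) : ∃ x, ∀ i, x ∈ S i := by
  classical
  suffices key : ∀ (s : Finset κ) (A : Set ι), (T.induce A).Connected → A.Nonempty →
      (∀ i ∈ s, (A ∩ S i).Nonempty) → ∃ x ∈ A, ∀ i ∈ s, x ∈ S i by
    obtain ⟨i₀⟩ := ‹Nonempty κ›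
    obtain ⟨x, -, hx⟩ := key Finset.univ (S i₀) (hS i₀)
      (Set.nonempty_coe_sort.mp (hS i₀).nonempty) fun i _ => hpair i₀ i
    exact ⟨x, fun i => hx i (Finset.mem_univ i)⟩
  intro s
  induction s using Finset.induction_on with
  | empty => exact fun A _ ⟨x, hx⟩ _ => ⟨x, hx, by simp⟩
  | insert j s _ ih =>
    intro A hA _ hAS
    have hAj := hAS j (Finset.mem_insert_self j s)
    obtain ⟨x, ⟨hxA, hxj⟩, hx⟩ := ih (A ∩ S j) (hT.connected_induce_inter hA (hS j) hAj) hAj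
      fun i hi => hT.inter_inter_nonempty hA (hS j) (hS i) hAj (hpair j i)
        ((hAS i (Finset.mem_insert_of_mem hi)).mono fun _ h => ⟨h.2, h.1⟩)
    exact ⟨x, hxA, by simpa [hxj] using hx⟩

end Tree

end SimpleGraph

theorem HasTreeDecompositionOfWidthLE.le_of_isMinorOf {V : Type} {G : SimpleGraph V} {n k : ℕ}
    (h : IsMinorOf (completeGraph (Fin (n + 1))) G) (hk : HasTreeDecompositionOfWidthLE G k) :
    n ≤ k := by
  obtain ⟨ι, T, bag, hT, hbag, hedge, hcard⟩ := hk
  obtain ⟨B, hBconn, hBdisj, hBadj⟩ := h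
  -- the bags meeting a branch set form a subtree, and these subtrees pairwise intersect, so by
  -- the Helly property one bag meets all `n + 1` disjoint branch sets
  let S (w : Fin (n + 1)) : Set ι := ⋃ v ∈ B w, {x | v ∈ bag x}
  have hS (w) : (T.induce (S w)).Connected :=
    SimpleGraph.connected_induce_biUnion (hBconn w) _ (fun v _ => hbag v)
      fun u _ v _ huv => (hedge u v huv).imp fun _ h => h
  have hpair (w w') : (S w ∩ S w').Nonempty := by
    obtain rfl | hne := eq_or_ne w w'
    · obtain ⟨⟨v, hv⟩⟩ := (hBconn w).nonempty
      obtain ⟨⟨x, hx⟩⟩ := (hbag v).nonempty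
      exact ⟨x, Set.mem_biUnion hv hx, Set.mem_biUnion hv hx⟩
    · obtain ⟨u, hu, v, hv, huv⟩ := hBadj w w' hne
      obtain ⟨x, hxu, hxv⟩ := hedge u v huv
      exact ⟨x, Set.mem_biUnion hu hxu, Set.mem_biUnion hv hxv⟩
  obtain ⟨x, hx⟩ := hT.exists_forall_mem_of_pairwise_inter_nonempty S hS hpair
  choose v hvB hvx using fun w => Set.mem_iUnion₂.mp (hx w)
  have hinj : Function.Injective v := fun w w' hvw => by
    by_contra hne
    exact Set.disjoint_left.mp (hBdisj hne) (hvB w) (hvw ▸ hvB w')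
  have := Finset.card_le_card_of_injOn v (s := Finset.univ) (fun w _ => hvx w) hinj.injOn
  simp only [Finset.card_univ, Fintype.card_fin] at this
  have := hcard x
  omega

theorem hasTreeDecompositionOfWidthLE_card {V : Type} [Fintype V] (G : SimpleGraph V) :
    HasTreeDecompositionOfWidthLE G (Fintype.card V) := by
  refine ⟨Unit, ⊥, fun _ => Finset.univ, ⟨?_, SimpleGraph.isAcyclic_bot⟩, fun v => ?_,
    fun u v _ => ⟨(), Finset.mem_univ u, Finset.mem_univ v⟩, fun _ => by simp⟩
  · exact ⟨fun _ _ => .of_subsingleton⟩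
  · have : Nonempty {x : Unit | v ∈ (Finset.univ : Finset V)} := ⟨⟨(), Finset.mem_univ v⟩⟩
    exact ⟨fun _ _ => .of_subsingleton⟩

theorem le_treewidth_of_isMinorOf {V : Type} [Finite V] {G : SimpleGraph V} {n : ℕ}
    (h : IsMinorOf (completeGraph (Fin (n + 1))) G) : n ≤ treewidth G := by
  have := Fintype.ofFinite V
  exact le_csInf ⟨_, hasTreeDecompositionOfWidthLE_card G⟩ fun _ hk => hk.le_of_isMinorOf h

theorem IsMinorOf.map_iso {W V V' : Type} {H : SimpleGraph W} {G : SimpleGraph V}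
    {G' : SimpleGraph V'} (h : IsMinorOf H G) (φ : G ≃g G') : IsMinorOf H G' := by
  obtain ⟨B, hconn, hdisj, hadj⟩ := h
  refine ⟨fun w => φ '' B w, fun w => ?_, fun w w' hww' => ?_, fun w w' hww' => ?_⟩
  · refine (hconn w).map (SimpleGraph.induceHom φ.toHom (Set.mapsTo_image _ _)) ?_
    rintro ⟨_, x, hx, rfl⟩
    exact ⟨⟨x, hx⟩, rfl⟩
  · exact (Set.disjoint_image_iff φ.injective).mpr (hdisj hww')
  · obtain ⟨u, hu, v, hv, huv⟩ := hadj w w' hww'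
    exact ⟨φ u, Set.mem_image_of_mem _ hu, φ v, Set.mem_image_of_mem _ hv, φ.map_adj_iff.mpr huv⟩

/-! ### Closed neighbourhoods -/

namespace SimpleGraph

variable {V : Type} {G : SimpleGraph V}

theorem dist_eq_two_of_adj_of_adj {u v w : V} (huv : u ≠ v) (h : ¬G.Adj u v) (hw : G.Adj u w)
    (hw' : G.Adj w v) : G.dist u v = 2 := by
  simp [dist, edist_eq_two_iff.mpr ⟨huv, h, w, hw, hw'.symm⟩]

def closedNbhdSubgraph (G : SimpleGraph V) (a : V) : G.Subgraph :=
  (⊤ : G.Subgraph).induce (insert a (G.neighborSet a))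

theorem closedNbhdSubgraph_coe_adj {a : V} {x y : (G.closedNbhdSubgraph a).verts} :
    (G.closedNbhdSubgraph a).coe.Adj x y ↔ G.Adj x y :=
  ⟨fun h => h.2.2, fun h => ⟨x.2, y.2, h⟩⟩

/-- All distances within a closed neighbourhood are at most two, realised through its centre. -/
theorem closedNbhdSubgraph_isIsometric (a : V) : (G.closedNbhdSubgraph a).IsIsometric := by
  set H := G.closedNbhdSubgraph a
  intro x y
  obtain rfl | hxy := eq_or_ne x y
  · simp
  have hcoe : H.coe.Adj x y ↔ G.Adj x y := closedNbhdSubgraph_coe_adj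
  by_cases hadj : G.Adj x y
  · rw [dist_eq_one_iff_adj.mpr hadj, dist_eq_one_iff_adj.mpr (hcoe.mpr hadj)]
  have mem (z : H.verts) : z.1 = a ∨ G.Adj a z := z.2
  have hx : G.Adj a x := by
    refine (mem x).resolve_left fun h => hadj ?_
    rw [h]
    exact (mem y).resolve_left fun h' => hxy (Subtype.ext (h.trans h'.symm))
  have hy : G.Adj a y := by
    refine (mem y).resolve_left fun h => hadj ?_
    rw [h]
    exact ((mem x).resolve_left fun h' => hxy (Subtype.ext (h'.trans h.symm))).symm
  let a' : H.verts := ⟨a, Set.mem_insert a _⟩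
  rw [dist_eq_two_of_adj_of_adj (Subtype.coe_ne_coe.mpr hxy) hadj hx.symm hy,
    dist_eq_two_of_adj_of_adj (w := a') hxy (mt hcoe.mp hadj)
      (closedNbhdSubgraph_coe_adj.mpr hx.symm) (closedNbhdSubgraph_coe_adj.mpr hy)]

theorem edgeCover_closedNbhdSubgraph (a b : V)
    (h : ∀ x y, G.Adj x y → ((x = a ∨ G.Adj a x) ∧ (y = a ∨ G.Adj a y)) ∨
      ((x = b ∨ G.Adj b x) ∧ (y = b ∨ G.Adj b y))) :
    EdgeCover ![G.closedNbhdSubgraph a, G.closedNbhdSubgraph b] := by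
  intro x y hxy
  rcases h x y hxy with ⟨hx, hy⟩ | ⟨hx, hy⟩
  · exact ⟨0, hx, hy, hxy⟩
  · exact ⟨1, hx, hy, hxy⟩

theorem inApex_closedNbhdSubgraph {U τ : Type} {X : SimpleGraph U} (a : V) (t : V → τ)
    (g : V → U) (hadj : ∀ x y, G.Adj a x → G.Adj a y → G.Adj x y → t x = t y ∧ X.Adj (g x) (g y))
    (hinj : ∀ x y, G.Adj a x → G.Adj a y → t x = t y → g x = g y → x = y) :
    InApex (G.closedNbhdSubgraph a).coe X := by
  set H := G.closedNbhdSubgraph a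
  let a' : H.verts := ⟨a, Set.mem_insert a _⟩
  have mem (x : {x : H.verts | x ≠ a'}) : G.Adj a x.1.1 :=
    (Set.mem_insert_iff.mp x.1.2).resolve_left fun h => x.2 (Subtype.ext h)
  have adj {x y : {x : H.verts | x ≠ a'}} (h : (H.coe.induce {x | x ≠ a'}).Adj x y) :
      G.Adj x.1.1 y.1.1 :=
    closedNbhdSubgraph_coe_adj.mp h
  refine ⟨a', fun c => ⟨fun z => g z.1.1.1, fun z z' hzz' => ?_, fun z z' h => ?_⟩⟩
  · have ht : t z.1.1.1 = t z'.1.1.1 :=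
      (ConnectedComponent.exact (z.2.trans z'.2.symm)).eq_of_forall_adj
        (σ := fun x => t x.1.1) fun x y h => (hadj _ _ (mem x) (mem y) (adj h)).1
    exact Subtype.ext <| Subtype.ext <| Subtype.ext <| hinj _ _ (mem _) (mem _) ht hzz'
  · exact (hadj _ _ (mem _) (mem _) (adj h)).2

theorem treedepth_closedNbhdSubgraph_le {a : V} [Fintype (G.closedNbhdSubgraph a).verts]
    {k : ℕ} (f : V → ℕ) (ρ : ℕ → V → V) (hf : ∀ x, G.Adj a x → f x < k)
    (hρ : ∀ r x y, G.Adj a x → G.Adj a y → G.Adj x y → f x ≤ r → f y ≤ r → ρ r x = ρ r y)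
    (hfix : ∀ x, G.Adj a x → ρ (f x) x = x) :
    treedepth (G.closedNbhdSubgraph a).coe ≤ k + 1 := by
  classical
  -- the centre is given the new top rank `k`
  let f' (x : V) : ℕ := if x = a then k else f x
  let ρ' (r : ℕ) (x : V) : V := if k ≤ r then a else ρ r x
  have mem (x : (G.closedNbhdSubgraph a).verts) (hx : x.1 ≠ a) : G.Adj a x :=
    (Set.mem_insert_iff.mp x.2).resolve_left hx
  have hf' (x : (G.closedNbhdSubgraph a).verts) : f' x < k + 1 := by
    by_cases hx : x.1 = a
    · simp [f', hx]
    · simpa [f', hx] using (hf _ (mem x hx)).trans (Nat.lt_succ_self k)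
  have hfix' (x : (G.closedNbhdSubgraph a).verts) : ρ' (f' x) x = x := by
    by_cases hx : x.1 = a
    · simp [f', ρ', hx]
    · simp [f', ρ', hx, (hf _ (mem x hx)).not_ge, hfix _ (mem x hx)]
  refine treedepth_le_of_isRanking (f := fun x => f' x.1)
    (isRanking_of_labeling (fun r x => ρ' r x.1) (fun r x y hxy hx hy => ?_)
      fun x y hxy h => Subtype.ext ((hfix' x).symm.trans (h.trans (hxy ▸ hfix' y)))) hf'
  by_cases hr : k ≤ r
  · simp [ρ', hr]
  have hxa : x.1 ≠ a := fun h => hr (by simpa [f', h] using hx)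
  have hya : y.1 ≠ a := fun h => hr (by simpa [f', h] using hy)
  simp only [f', hxa, hya, if_false] at hx hy
  simpa [ρ', hr] using hρ r x y (mem x hxa) (mem y hya) (closedNbhdSubgraph_coe_adj.mp hxy) hx hy

end SimpleGraph

/-! ### The graph `G_n` -/

namespace ApexCover

abbrev Node (n : ℕ) := Fin (n + 1) × Fin (n + 1)

variable {n : ℕ}

/-- The links of the base graph `X_n`, oriented: `(w, j) → (w, j + 1)` along row `w`, and
`(w, w') → (w', w)` across for `w < w'`. Every node lies on at most three links, and contracting
the rows gives `K_{n+1}`. -/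
def IsLink (p q : Node n) : Prop :=
  (p.1 = q.1 ∧ q.2.val = p.2.val + 1) ∨ (p.1 < p.2 ∧ q = (p.2, p.1))

theorem IsLink.not_isLink {p q : Node n} (h : IsLink p q) : ¬IsLink q p := by
  simp only [IsLink, Prod.ext_iff, Fin.ext_iff, Fin.lt_def] at h ⊢
  omega

/-- Names the link at `p` towards `q`: forward along the row, backward, or across. -/
def dir (p q : Node n) : Fin 3 := if p.1 = q.1 then (if p.2 < q.2 then 0 else 1) else 2

theorem eq_of_dir_eq {p q q' : Node n} (hq : IsLink p q ∨ IsLink q p)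
    (hq' : IsLink p q' ∨ IsLink q' p) (h : dir p q = dir p q') : q = q' := by
  simp only [IsLink, dir, Prod.ext_iff, Fin.ext_iff, Fin.lt_def] at hq hq' h ⊢
  split_ifs at h <;> simp at h <;> omega

/-- `sub p q i` is the `i`-th of the five vertices subdividing the link `p → q`; when `p → q` is
not a link it is an isolated vertex. -/
inductive Vertex (n : ℕ) : Type
  | apex₁ | apex₂
  | node (p : Node n)
  | sub (p q : Node n) (i : Fin 5)

open Vertex

instance : Finite (Vertex n) :=
  Finite.of_surjective (fun x : Bool ⊕ Node n ⊕ Node n × Node n × Fin 5 =>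
    match x with
    | .inl true => apex₁
    | .inl false => apex₂
    | .inr (.inl p) => node p
    | .inr (.inr (p, q, i)) => sub p q i)
    (by rintro (_ | _ | p | ⟨p, q, i⟩) <;> simp)

def edgeRel : Vertex n → Vertex n → Prop
  | apex₁, sub p q i => IsLink p q ∧ 1 ≤ i.val ∧ i.val ≤ 3
  | apex₂, node _ => True
  | apex₂, sub p q i => IsLink p q ∧ i.val ≠ 2
  | node r, sub p q i => IsLink p q ∧ (r = p ∧ i.val = 0 ∨ r = q ∧ i.val = 4)
  | sub p q i, sub p' q' j => IsLink p q ∧ p' = p ∧ q' = q ∧ j.val = i.val + 1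
  | _, _ => False

def graph (n : ℕ) : SimpleGraph (Vertex n) := SimpleGraph.fromRel edgeRel

theorem adj_apex₁ {x : Vertex n} : (graph n).Adj apex₁ x ↔ edgeRel apex₁ x := by
  cases x <;> simp [graph, edgeRel]

theorem adj_apex₂ {x : Vertex n} : (graph n).Adj apex₂ x ↔ edgeRel apex₂ x := by
  cases x <;> simp [graph, edgeRel]

theorem adj_mem_closedNbhd_apex {x y : Vertex n} (h : (graph n).Adj x y) :
    ((x = apex₁ ∨ (graph n).Adj apex₁ x) ∧ (y = apex₁ ∨ (graph n).Adj apex₁ y)) ∨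
    ((x = apex₂ ∨ (graph n).Adj apex₂ x) ∧ (y = apex₂ ∨ (graph n).Adj apex₂ y)) := by
  simp only [adj_apex₁, adj_apex₂]
  cases x <;> cases y <;> simp [graph, edgeRel] at h ⊢ <;> grind

/-! `rank₁` and `rank₂` are vertex rankings of `N(apex₁)` and `N(apex₂)`; `root r x` is the vertex
of rank `r` in the component of `x` among the vertices of rank at most `r`. -/

def rank₁ : Vertex n → ℕ
  | sub _ _ i => if i.val = 2 then 1 else 0
  | _ => 0

def root₁ : ℕ → Vertex n → Vertex n
  | 0, x => x
  | _ + 1, sub p q _ => sub p q 2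
  | _ + 1, x => x

def pos₁ : Vertex n → Fin 3
  | sub _ _ i => ⟨min (i.val - 1) 2, by omega⟩
  | _ => 0

theorem rank₁_lt_two (x : Vertex n) : rank₁ x < 2 := by
  cases x <;> grind [rank₁]

theorem root₁_eq_of_adj {r : ℕ} {x y : Vertex n} (hx : (graph n).Adj apex₁ x)
    (hy : (graph n).Adj apex₁ y) (h : (graph n).Adj x y) (hxr : rank₁ x ≤ r) (hyr : rank₁ y ≤ r) :
    root₁ r x = root₁ r y := by
  rw [adj_apex₁] at hx hy
  cases x <;> cases y <;> simp [edgeRel] at hx hy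
  simp [graph, edgeRel] at h
  rcases r with _ | r <;> simp [rank₁, root₁] at hxr hyr ⊢ <;> grind

theorem root₁_rank₁ {x : Vertex n} (hx : (graph n).Adj apex₁ x) : root₁ (rank₁ x) x = x := by
  rw [adj_apex₁] at hx
  cases x <;> simp [edgeRel] at hx
  simp only [rank₁]
  split_ifs with h
  · simp [root₁, Fin.ext_iff, h]
  · rfl

theorem pos₁_adj {x y : Vertex n} (hx : (graph n).Adj apex₁ x) (hy : (graph n).Adj apex₁ y)
    (h : (graph n).Adj x y) : root₁ 1 x = root₁ 1 y ∧ (pathGraph 3).Adj (pos₁ x) (pos₁ y) := by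
  rw [adj_apex₁] at hx hy
  cases x <;> cases y <;> simp [edgeRel] at hx hy
  simp [graph, edgeRel] at h
  simp [root₁, pos₁, pathGraph_adj]
  grind

theorem pos₁_inj {x y : Vertex n} (hx : (graph n).Adj apex₁ x) (hy : (graph n).Adj apex₁ y)
    (h : root₁ 1 x = root₁ 1 y) (h' : pos₁ x = pos₁ y) : x = y := by
  rw [adj_apex₁] at hx hy
  cases x <;> cases y <;> simp [edgeRel] at hx hy
  simp [root₁, pos₁, Fin.ext_iff] at h h' ⊢
  exact ⟨h.1, h.2, by omega⟩

/-- The end of the link `p → q` on whose side `sub p q i` lies. -/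
def near (p q : Node n) (i : Fin 5) : Node n := if i.val ≤ 2 then p else q

def rank₂ : Vertex n → ℕ
  | node _ => 2
  | sub _ _ i => if i.val = 0 ∨ i.val = 4 then 1 else 0
  | _ => 0

def root₂ : ℕ → Vertex n → Vertex n
  | 1, sub p q i => sub p q (if i.val ≤ 2 then 0 else 4)
  | _ + 2, sub p q i => node (near p q i)
  | _, x => x

/-- The place of `sub p q i` in the subdivided star around `near p q i`. -/
def leg₂ : Vertex n → Option (Fin 3 × Bool)
  | sub p q i => some (if i.val ≤ 2 then dir p q else dir q p, decide (i.val = 1 ∨ i.val = 3))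
  | _ => none

theorem rank₂_lt_three (x : Vertex n) : rank₂ x < 3 := by
  cases x <;> grind [rank₂]

theorem root₂_eq_of_adj {r : ℕ} {x y : Vertex n} (hx : (graph n).Adj apex₂ x)
    (hy : (graph n).Adj apex₂ y) (h : (graph n).Adj x y) (hxr : rank₂ x ≤ r) (hyr : rank₂ y ≤ r) :
    root₂ r x = root₂ r y := by
  rw [adj_apex₂] at hx hy
  cases x <;> cases y <;> simp [edgeRel] at hx hy <;> simp [graph, edgeRel] at h
  all_goals rcases r with _ | _ | r <;> simp [rank₂, root₂, near] at hxr hyr ⊢ <;> grind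

theorem root₂_rank₂ {x : Vertex n} (hx : (graph n).Adj apex₂ x) : root₂ (rank₂ x) x = x := by
  rw [adj_apex₂] at hx
  cases x <;> simp [edgeRel] at hx
  · rfl
  · simp only [rank₂]
    split_ifs with h
    · rcases h with h | h <;> simp [root₂, Fin.ext_iff, h]
    · rfl

theorem leg₂_adj {x y : Vertex n} (hx : (graph n).Adj apex₂ x) (hy : (graph n).Adj apex₂ y)
    (h : (graph n).Adj x y) :
    root₂ 2 x = root₂ 2 y ∧ (subdividedStar 3).Adj (leg₂ x) (leg₂ y) := by
  rw [adj_apex₂] at hx hy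
  cases x <;> cases y <;> simp [edgeRel] at hx hy <;> simp [graph, edgeRel] at h
  all_goals simp [root₂, leg₂, near, subdividedStar]; grind

theorem leg₂_inj {x y : Vertex n} (hx : (graph n).Adj apex₂ x) (hy : (graph n).Adj apex₂ y)
    (h : root₂ 2 x = root₂ 2 y) (h' : leg₂ x = leg₂ y) : x = y := by
  rw [adj_apex₂] at hx hy
  cases x <;> cases y <;> simp [edgeRel] at hx hy <;> simp [root₂, leg₂, near] at h h' ⊢
  · exact h
  obtain ⟨⟨hl, hi⟩, ⟨hl', hi'⟩, ⟨hd, hb⟩⟩ := And.intro hx (And.intro hy h')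
  split_ifs at h hd with h₁ h₂ h₂ <;> subst h
  · obtain rfl := eq_of_dir_eq (.inl hl) (.inl hl') hd
    exact ⟨rfl, rfl, Fin.ext (by grind)⟩
  · obtain rfl := eq_of_dir_eq (.inl hl) (.inr hl') hd
    exact absurd hl' hl.not_isLink
  · obtain rfl := eq_of_dir_eq (.inr hl) (.inl hl') hd
    exact absurd hl' hl.not_isLink
  · obtain rfl := eq_of_dir_eq (.inr hl) (.inr hl') hd
    exact ⟨rfl, rfl, Fin.ext (by grind)⟩

/-- The branch set of row `w`: its nodes and the subdivision vertices on their side of the links. -/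
def InRow (w : Fin (n + 1)) : Vertex n → Prop
  | node p => p.1 = w
  | sub p q i => IsLink p q ∧ (near p q i).1 = w
  | _ => False

/-- Decreases along a path to `node (w, 0)` inside the branch set of row `w`. -/
def potential : Vertex n → ℕ
  | node p => 6 * p.2
  | sub p q i => if p.1 = q.1 ∨ i.val ≤ 2 then 6 * p.2 + i + 1 else 6 * q.2 + 5 - i
  | _ => 0

theorem exists_adj_potential_lt {w : Fin (n + 1)} {x : Vertex n} (hx : InRow w x)
    (hx₀ : x ≠ node (w, 0)) : ∃ y, InRow w y ∧ (graph n).Adj x y ∧ potential y < potential x := by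
  cases x with
  | apex₁ | apex₂ => exact hx.elim
  | node p =>
    obtain ⟨p₁, j⟩ := p
    obtain rfl : w = p₁ := hx.symm
    have hj : j.val ≠ 0 := fun h => hx₀ (by simp [Fin.ext_iff, h])
    refine ⟨sub (w, ⟨j - 1, by omega⟩) (w, j) 4, ⟨.inl ⟨rfl, by simp; omega⟩, by simp [near]⟩,
      ?_, ?_⟩
    · simp [graph, edgeRel, IsLink]; omega
    · simp [potential]; omega
  | sub p q i =>
    obtain ⟨hl, hw⟩ := hx
    by_cases hdown : p.1 = q.1 ∨ i.val ≤ 2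
    · by_cases hi : i.val = 0
      · refine ⟨node p, ?_, ?_, ?_⟩ <;> simp_all [InRow, near, graph, edgeRel, potential]
      · refine ⟨sub p q ⟨i - 1, by omega⟩, ⟨hl, ?_⟩, ?_, ?_⟩ <;>
          simp [near, graph, edgeRel, potential, Fin.ext_iff] at hw hdown ⊢ <;> grind
    · have hi : 3 ≤ i.val := by omega
      by_cases hi4 : i.val = 4
      · refine ⟨node q, ?_, ?_, ?_⟩ <;> simp_all [InRow, near, graph, edgeRel, potential]
      · refine ⟨sub p q 4, ⟨hl, ?_⟩, ?_, ?_⟩ <;>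
          simp [near, graph, edgeRel, potential, Fin.ext_iff] at hw hdown ⊢ <;> grind

theorem isMinorOf_graph (n : ℕ) : IsMinorOf (completeGraph (Fin (n + 1))) (graph n) := by
  refine ⟨fun w => {x | InRow w x}, fun w => ?_, fun w w' hww' => ?_, fun w w' hww' => ?_⟩
  · exact SimpleGraph.connected_induce_of_exists_adj_lt (r := node (w, 0)) rfl potential
      fun x hx hx₀ => exists_adj_potential_lt hx hx₀
  · refine Set.disjoint_left.mpr fun x hx hx' => hww' ?_
    cases x <;> simp_all [InRow]
  · wlog h : w < w' generalizing w w'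
    · obtain ⟨u, hu, v, hv, huv⟩ := this w' w hww'.symm (lt_of_le_of_ne (not_lt.mp h) hww'.symm)
      exact ⟨v, hv, u, hu, huv.symm⟩
    refine ⟨sub (w, w') (w', w) 2, ⟨.inr ⟨h, rfl⟩, by simp [near]⟩,
      sub (w, w') (w', w) 3, ⟨.inr ⟨h, rfl⟩, by simp [near]⟩, ?_⟩
    simp [graph, edgeRel, IsLink, h]

section Relabel

variable {W : Type} (e : Vertex n ≃ W)

theorem edgeCover_comap :
    EdgeCover ![((graph n).comap e.symm).closedNbhdSubgraph (e apex₁),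
      ((graph n).comap e.symm).closedNbhdSubgraph (e apex₂)] :=
  SimpleGraph.edgeCover_closedNbhdSubgraph _ _ fun x y h => by
    simpa [e.symm_apply_eq] using adj_mem_closedNbhd_apex h

theorem inApex_comap_apex₁ :
    InApex (((graph n).comap e.symm).closedNbhdSubgraph (e apex₁)).coe (pathGraph 3) :=
  SimpleGraph.inApex_closedNbhdSubgraph _ (root₁ 1 ∘ e.symm) (pos₁ ∘ e.symm)
    (fun _ _ hx hy h => pos₁_adj (by simpa using hx) (by simpa using hy) h)
    fun _ _ hx hy h h' => e.symm.injective <|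
      pos₁_inj (by simpa using hx) (by simpa using hy) h h'

theorem inApex_comap_apex₂ :
    InApex (((graph n).comap e.symm).closedNbhdSubgraph (e apex₂)).coe (subdividedStar 3) :=
  SimpleGraph.inApex_closedNbhdSubgraph _ (root₂ 2 ∘ e.symm) (leg₂ ∘ e.symm)
    (fun _ _ hx hy h => leg₂_adj (by simpa using hx) (by simpa using hy) h)
    fun _ _ hx hy h h' => e.symm.injective <|
      leg₂_inj (by simpa using hx) (by simpa using hy) h h'

theorem treedepth_comap_apex₁_le [Fintype W] :
    treedepth (((graph n).comap e.symm).closedNbhdSubgraph (e apex₁)).coe ≤ 3 :=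
  SimpleGraph.treedepth_closedNbhdSubgraph_le (k := 2) (rank₁ ∘ e.symm)
    (fun r => e ∘ root₁ r ∘ e.symm) (fun _ _ => rank₁_lt_two _)
    (fun _ _ _ hx hy h hxr hyr => congrArg e <| root₁_eq_of_adj
      (by simpa using hx) (by simpa using hy) h hxr hyr)
    fun _ hx => by simp [root₁_rank₁ (by simpa using hx)]

theorem treedepth_comap_apex₂_le [Fintype W] :
    treedepth (((graph n).comap e.symm).closedNbhdSubgraph (e apex₂)).coe ≤ 4 :=
  SimpleGraph.treedepth_closedNbhdSubgraph_le (k := 3) (rank₂ ∘ e.symm)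
    (fun r => e ∘ root₂ r ∘ e.symm) (fun _ _ => rank₂_lt_three _)
    (fun _ _ _ hx hy h hxr hyr => congrArg e <| root₂_eq_of_adj
      (by simpa using hx) (by simpa using hy) h hxr hyr)
    fun _ hx => by simp [root₂_rank₂ (by simpa using hx)]

end Relabel

end ApexCover

open ApexCover

theorem stmt17_general (n : ℕ) :
    ∃ (m : ℕ) (G : SimpleGraph (Fin m)) (H : Fin 2 → G.Subgraph),
      n ≤ treewidth G ∧ EdgeCover H ∧ (∀ i, (H i).IsIsometric) ∧
      InApex (H 0).coe (SimpleGraph.pathGraph 3) ∧ InApex (H 1).coe (subdividedStar 3) ∧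
      treedepth (H 0).coe ≤ 3 ∧ treedepth (H 1).coe ≤ 4 := by
  let e := Finite.equivFin (Vertex n)
  exact ⟨_, (graph n).comap e.symm, _,
    le_treewidth_of_isMinorOf ((isMinorOf_graph n).map_iso (Iso.comap e.symm (graph n)).symm),
    edgeCover_comap e,
    Fin.forall_fin_two.mpr ⟨closedNbhdSubgraph_isIsometric _, closedNbhdSubgraph_isIsometric _⟩,
    inApex_comap_apex₁ e, inApex_comap_apex₂ e, treedepth_comap_apex₁_le e,
    treedepth_comap_apex₂_le e⟩

theorem stmt17 (n : ℕ) (hn : 1 ≤ n) :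
    ∃ (m : ℕ) (G : SimpleGraph (Fin m)) (H : Fin 2 → G.Subgraph),
      n ≤ treewidth G ∧ EdgeCover H ∧ (∀ i, (H i).IsIsometric) ∧
      InApex (H 0).coe (SimpleGraph.pathGraph 3) ∧ InApex (H 1).coe (subdividedStar 3) ∧
      treedepth (H 0).coe ≤ 3 ∧ treedepth (H 1).coe ≤ 4 :=
  stmt17_general n
end
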